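/- arXiv:2601.09354 — 3 statements merged into one kernel-verified Lean document; each statement's English description precedes it below -/
import Mathlib

section
/- With n ≥ 2 agents and additive preference vectors P^1,...,P^n : Fin m → ℝ≥0, suppose there exists an allocation β with min_i u_i(β) > 0 (every agent gets positive utility). Suppose agent 1 reports the scaled vector c·P^1 where c > 0 satisfies c · Σ_j P^1(j) < P^k(l) for all k ≠ 1 and l with P^k(l) > 0. Then any allocation α* maximizing the egalitarian welfare of the reported profile (c·P^1, P^2, ..., P^n) also maximizes agent 1's true utility u_1(α) = Σ_{j : α(j)=1} P^1(j) among all allocations α in which every other agent k ≠ 1 has positive utility u_k(α) > 0. -/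
/-!
If every other agent receives some item it values positively, its utility exceeds
`c * ∑ j, P a j`, which bounds the reported utility of agent `a` from above. So on the
allocations giving all other agents positive utility, the reported egalitarian welfare is
exactly `c` times the true utility of `a`. For such an allocation `α` with `u_a(α) > 0`, an
egalitarian optimum has welfare at least `c * u_a(α) > 0`; positive welfare puts the optimum in
the same class, where the two objectives agree.
-/

/-- Additive utility of agent `i` under preference vector `p`. -/
def addUtil {n m : ℕ} (p : Fin m → ℝ) (i : Fin n) (α : Fin m → Fin n) : ℝ :=
  ∑ j ∈ Finset.univ.filter (fun j => α j = i), p j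

/-- Egalitarian social welfare of the additive profile `P`. -/
noncomputable def eg {n m : ℕ} (hn : 0 < n) (P : Fin n → Fin m → ℝ)
    (α : Fin m → Fin n) : ℝ :=
  Finset.univ.inf' (Finset.univ_nonempty_iff.mpr (Fin.pos_iff_nonempty.mp hn))
    fun i => addUtil (P i) i α

section Utility

variable {n m : ℕ}

lemma addUtil_nonneg {p : Fin m → ℝ} (hp : ∀ j, 0 ≤ p j) (i : Fin n) (α : Fin m → Fin n) :
    0 ≤ addUtil p i α :=
  Finset.sum_nonneg fun j _ => hp j

lemma addUtil_le_sum {p : Fin m → ℝ} (hp : ∀ j, 0 ≤ p j) (i : Fin n) (α : Fin m → Fin n) :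
    addUtil p i α ≤ ∑ j, p j :=
  Finset.sum_le_sum_of_subset_of_nonneg (Finset.filter_subset _ _) fun j _ _ => hp j

lemma le_addUtil_of_apply_eq {p : Fin m → ℝ} (hp : ∀ j, 0 ≤ p j) {i : Fin n}
    {α : Fin m → Fin n} {l : Fin m} (hl : α l = i) : p l ≤ addUtil p i α :=
  Finset.single_le_sum (fun j _ => hp j) (Finset.mem_filter.mpr ⟨Finset.mem_univ l, hl⟩)

lemma exists_pos_of_addUtil_pos {p : Fin m → ℝ} {i : Fin n} {α : Fin m → Fin n}
    (h : 0 < addUtil p i α) : ∃ l, α l = i ∧ 0 < p l := by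
  obtain ⟨l, hl, hpl⟩ := Finset.exists_lt_of_sum_lt (f := fun _ => 0) (g := p)
    (s := Finset.univ.filter (α · = i)) (by rwa [Finset.sum_const_zero])
  exact ⟨l, (Finset.mem_filter.mp hl).2, hpl⟩

lemma addUtil_const_mul (c : ℝ) (p : Fin m → ℝ) (i : Fin n) (α : Fin m → Fin n) :
    addUtil (fun j => c * p j) i α = c * addUtil p i α :=
  (Finset.mul_sum _ _ _).symm

lemma eg_le_addUtil (hn : 0 < n) (P : Fin n → Fin m → ℝ) (α : Fin m → Fin n) (i : Fin n) :
    eg hn P α ≤ addUtil (P i) i α :=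
  Finset.inf'_le _ (Finset.mem_univ i)

lemma le_eg_iff {hn : 0 < n} {P : Fin n → Fin m → ℝ} {α : Fin m → Fin n} {a : ℝ} :
    a ≤ eg hn P α ↔ ∀ i, a ≤ addUtil (P i) i α := by
  simp [eg, Finset.le_inf'_iff]

end Utility

def scaleReport {n m : ℕ} (P : Fin n → Fin m → ℝ) (a : Fin n) (c : ℝ) :
    Fin n → Fin m → ℝ :=
  fun k => if k = a then (fun j => c * P a j) else P k

section Underreport

variable {n m : ℕ} {P : Fin n → Fin m → ℝ} {a : Fin n} {c : ℝ}

lemma addUtil_scaleReport_self (α : Fin m → Fin n) :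
    addUtil (scaleReport P a c a) a α = c * addUtil (P a) a α := by
  rw [scaleReport, if_pos rfl, addUtil_const_mul]

lemma scaleReport_of_ne {k : Fin n} (hk : k ≠ a) : scaleReport P a c k = P k :=
  if_neg hk

variable (hP : ∀ i j, 0 ≤ P i j) (hc : 0 < c)
  (hsmall : ∀ k, k ≠ a → ∀ l, 0 < P k l → c * ∑ j, P a j < P k l)
include hP hc hsmall

lemma mul_addUtil_lt_addUtil_of_pos {γ : Fin m → Fin n} {k : Fin n} (hk : k ≠ a)
    (hpos : 0 < addUtil (P k) k γ) : c * addUtil (P a) a γ < addUtil (P k) k γ := by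
  obtain ⟨l, hl, hPl⟩ := exists_pos_of_addUtil_pos hpos
  calc c * addUtil (P a) a γ ≤ c * ∑ j, P a j :=
        mul_le_mul_of_nonneg_left (addUtil_le_sum (hP a) a γ) hc.le
    _ < P k l := hsmall k hk l hPl
    _ ≤ addUtil (P k) k γ := le_addUtil_of_apply_eq (hP k) hl

lemma eg_scaleReport_eq (hn : 0 < n) {γ : Fin m → Fin n}
    (hothers : ∀ k, k ≠ a → 0 < addUtil (P k) k γ) :
    eg hn (scaleReport P a c) γ = c * addUtil (P a) a γ := by
  refine le_antisymm ?_ (le_eg_iff.mpr fun k => ?_)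
  · exact (eg_le_addUtil hn _ γ a).trans_eq (addUtil_scaleReport_self γ)
  · by_cases hk : k = a
    · subst hk
      exact (addUtil_scaleReport_self γ).ge
    · rw [scaleReport_of_ne hk]
      exact (mul_addUtil_lt_addUtil_of_pos hP hc hsmall hk (hothers k hk)).le

end Underreport

lemma addUtil_pos_of_eg_scaleReport_pos {n m : ℕ} {P : Fin n → Fin m → ℝ} {a : Fin n} {c : ℝ}
    {hn : 0 < n} {γ : Fin m → Fin n} (h : 0 < eg hn (scaleReport P a c) γ) {k : Fin n}
    (hk : k ≠ a) : 0 < addUtil (P k) k γ :=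
  h.trans_le (scaleReport_of_ne (c := c) (P := P) hk ▸ eg_le_addUtil hn _ γ k)

theorem stmt_5_general (n m : ℕ) (hn : 2 ≤ n) (P : Fin n → Fin m → ℝ)
    (hP : ∀ i j, 0 ≤ P i j) (a1 : Fin n)
    (c : ℝ) (hc : 0 < c)
    (hcsmall : ∀ k : Fin n, k ≠ a1 → ∀ l : Fin m, 0 < P k l →
      c * ∑ j, P a1 j < P k l)
    (αstar : Fin m → Fin n)
    (hopt : ∀ α : Fin m → Fin n,
      eg (lt_of_lt_of_le two_pos hn)
        (fun k => if k = a1 then (fun j => c * P a1 j) else P k) α ≤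
      eg (lt_of_lt_of_le two_pos hn)
        (fun k => if k = a1 then (fun j => c * P a1 j) else P k) αstar) :
    ∀ α : Fin m → Fin n, (∀ k : Fin n, k ≠ a1 → 0 < addUtil (P k) k α) →
      addUtil (P a1) a1 α ≤ addUtil (P a1) a1 αstar := by
  intro α hα
  change ∀ α, eg _ (scaleReport P a1 c) α ≤ eg _ (scaleReport P a1 c) αstar at hopt
  rcases (addUtil_nonneg (hP a1) a1 α).eq_or_lt with hzero | hpos
  · exact hzero ▸ addUtil_nonneg (hP a1) a1 αstar
  have hegα := eg_scaleReport_eq hP hc hcsmall (lt_of_lt_of_le two_pos hn) hα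
  have hegstar_pos : 0 < eg _ (scaleReport P a1 c) αstar :=
    (hegα ▸ mul_pos hc hpos).trans_le (hopt α)
  have hegstar := eg_scaleReport_eq hP hc hcsmall (lt_of_lt_of_le two_pos hn)
    fun k hk => addUtil_pos_of_eg_scaleReport_pos hegstar_pos hk
  have := hopt α
  rw [hegα, hegstar] at this
  exact le_of_mul_le_mul_left this hc

theorem stmt_5 (n m : ℕ) (hn : 2 ≤ n) (P : Fin n → Fin m → ℝ)
    (hP : ∀ i j, 0 ≤ P i j) (a1 : Fin n)
    (hβ : ∃ β : Fin m → Fin n, 0 < eg (lt_of_lt_of_le two_pos hn) P β)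
    (c : ℝ) (hc : 0 < c)
    (hcsmall : ∀ k : Fin n, k ≠ a1 → ∀ l : Fin m, 0 < P k l →
      c * ∑ j, P a1 j < P k l)
    (αstar : Fin m → Fin n)
    (hopt : ∀ α : Fin m → Fin n,
      eg (lt_of_lt_of_le two_pos hn)
        (fun k => if k = a1 then (fun j => c * P a1 j) else P k) α ≤
      eg (lt_of_lt_of_le two_pos hn)
        (fun k => if k = a1 then (fun j => c * P a1 j) else P k) αstar) :
    ∀ α : Fin m → Fin n, (∀ k : Fin n, k ≠ a1 → 0 < addUtil (P k) k α) →
      addUtil (P a1) a1 α ≤ addUtil (P a1) a1 αstar :=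
  stmt_5_general n m hn P hP a1 c hc hcsmall αstar hopt
end

section
/- Let n ≥ 2 agents with additive preference vectors P^1,...,P^n : Fin m → ℝ≥0, and suppose agent 1 reports a fake vector F : Fin m → ℝ≥0 while the others report truthfully. For any allocation α* maximizing the egalitarian welfare of the reported profile (F, P^2, ..., P^n), agent 1's true utility u_1(α*) = Σ_{j : α*(j)=1} P^1(j) is at most Σ_j P^1(j). If additionally some allocation gives every agent positive reported utility and all vectors P^k (k ≠ 1) have at least one positive entry, then u_1(α*) ≤ Σ_j P^1(j) minus the minimum, over injective assignments of one resource to each agent k ≠ 1, of the sum of agent 1's values of those n−1 resources. -/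
theorem stmt_13 (n m : ℕ) (hn : 2 ≤ n) (hm : n ≤ m)
    (P : Fin n → Fin m → ℝ) (hP : ∀ i j, 0 ≤ P i j) (a1 : Fin n)
    (F : Fin m → ℝ) (hF : ∀ j, 0 ≤ F j)
    (αstar : Fin m → Fin n)
    (hopt : ∀ α : Fin m → Fin n,
      eg (lt_of_lt_of_le two_pos hn) (fun k => if k = a1 then F else P k) α ≤
      eg (lt_of_lt_of_le two_pos hn) (fun k => if k = a1 then F else P k) αstar) :
    addUtil (P a1) a1 αstar ≤ (∑ j, P a1 j) ∧
    ((∃ β : Fin m → Fin n,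
        ∀ i, 0 < addUtil ((fun k => if k = a1 then F else P k) i) i β) →
      (∀ k : Fin n, k ≠ a1 → ∃ l, 0 < P k l) →
      addUtil (P a1) a1 αstar ≤ (∑ j, P a1 j) -
        sInf {x : ℝ | ∃ g : {k : Fin n // k ≠ a1} → Fin m,
          Function.Injective g ∧ x = ∑ k : {k : Fin n // k ≠ a1}, P a1 (g k)}) := by
  have hpos2 : (0:ℕ) < n := lt_of_lt_of_le two_pos hn
  constructor
  · exact Finset.sum_le_sum_of_subset_of_nonneg (Finset.filter_subset _ _)
      (fun j _ _ => hP a1 j)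
  · rintro ⟨β, hβ⟩ _
    have hegβ : 0 < eg hpos2 (fun k => if k = a1 then F else P k) β := by
      rw [eg, Finset.lt_inf'_iff]
      exact fun i _ => hβ i
    have hegα := lt_of_lt_of_le hegβ (hopt β)
    have hk : ∀ k : Fin n, k ≠ a1 → ∃ j, αstar j = k := by
      intro k hk
      have h1 : eg hpos2 (fun k => if k = a1 then F else P k) αstar ≤
          addUtil ((fun k => if k = a1 then F else P k) k) k αstar :=
        Finset.inf'_le _ (Finset.mem_univ k)
      have h2 : 0 < addUtil (P k) k αstar := by
        have := lt_of_lt_of_le hegα h1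
        simpa [hk] using this
      by_contra hno
      push_neg at hno
      have : addUtil (P k) k αstar = 0 := by
        rw [addUtil, Finset.sum_eq_zero]
        intro j hj
        simp only [Finset.mem_filter] at hj
        exact absurd hj.2 (hno j)
      linarith
    choose g hg using fun k : {k : Fin n // k ≠ a1} => hk k.1 k.2
    have hginj : Function.Injective g := by
      intro k l hkl
      have : (k : Fin n) = l := by rw [← hg k, ← hg l, hkl]
      exact Subtype.ext this
    set S : Set ℝ := {x : ℝ | ∃ g : {k : Fin n // k ≠ a1} → Fin m,
      Function.Injective g ∧ x = ∑ k : {k : Fin n // k ≠ a1}, P a1 (g k)}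
    have hmem : (∑ k : {k : Fin n // k ≠ a1}, P a1 (g k)) ∈ S := ⟨g, hginj, rfl⟩
    have hbdd : BddBelow S := by
      refine ⟨0, fun x hx => ?_⟩
      obtain ⟨g', _, rfl⟩ := hx
      exact Finset.sum_nonneg fun k _ => hP a1 (g' k)
    have hinf : sInf S ≤ ∑ k : {k : Fin n // k ≠ a1}, P a1 (g k) := csInf_le hbdd hmem
    have hsum : addUtil (P a1) a1 αstar + ∑ k : {k : Fin n // k ≠ a1}, P a1 (g k)
        ≤ ∑ j, P a1 j := by
      have himg : (∑ k : {k : Fin n // k ≠ a1}, P a1 (g k)) =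
          ∑ j ∈ Finset.univ.image g, P a1 j :=
        (Finset.sum_image (fun a _ b _ h => hginj h)).symm
      have hdisj : Disjoint (Finset.univ.filter (fun j => αstar j = a1))
          (Finset.univ.image g) := by
        rw [Finset.disjoint_left]
        intro j hj hj2
        simp only [Finset.mem_filter] at hj
        simp only [Finset.mem_image] at hj2
        obtain ⟨k, _, rfl⟩ := hj2
        exact k.2 (by rw [← hg k, hj.2])
      rw [addUtil, himg, ← Finset.sum_union hdisj]
      exact Finset.sum_le_sum_of_subset_of_nonneg (Finset.subset_univ _)
        (fun j _ _ => hP a1 j)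
    linarith
end

section
/- In the unlimited scenario with n ≥ 2 agents, m ≥ n resources, additive vectors P^1,...,P^n : Fin m → ℝ≥0 all having strictly positive entries, suppose agent 1 reports c·P^1 with c > 0 satisfying c·Σ_j P^1(j) < min_{k≠1, l} P^k(l). Then in any allocation α* maximizing the egalitarian welfare of the reported profile, each agent k ≠ 1 receives at least one resource. -/
theorem stmt_15 (n m : ℕ) (hn : 2 ≤ n) (hm : n ≤ m)
    (P : Fin n → Fin m → ℝ) (hP : ∀ i j, 0 < P i j) (a1 : Fin n)
    (c : ℝ) (hc : 0 < c)
    (hcsmall : ∀ k : Fin n, k ≠ a1 → ∀ l : Fin m, c * ∑ j, P a1 j < P k l) :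
    ∀ αstar : Fin m → Fin n,
      (∀ α : Fin m → Fin n,
        eg (lt_of_lt_of_le two_pos hn)
          (fun k => if k = a1 then (fun j => c * P a1 j) else P k) α ≤
        eg (lt_of_lt_of_le two_pos hn)
          (fun k => if k = a1 then (fun j => c * P a1 j) else P k) αstar) →
      ∀ k : Fin n, k ≠ a1 → ∃ j : Fin m, αstar j = k := by
  intro αstar hopt k hk
  set Q : Fin n → Fin m → ℝ := fun k => if k = a1 then (fun j => c * P a1 j) else P k with hQ
  have hQpos : ∀ i j, 0 < Q i j := by
    intro i j
    by_cases h : i = a1 <;> simp [hQ, h]  <;> [exact mul_pos hc (hP a1 j); exact hP i j]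
  by_contra hno
  push_neg at hno
  -- a surjective allocation
  have hnpos : 0 < n := lt_of_lt_of_le two_pos hn
  set α0 : Fin m → Fin n := fun j => ⟨(j : ℕ) % n, Nat.mod_lt _ hnpos⟩ with hα0
  have hsurj : ∀ i : Fin n, α0 ⟨(i : ℕ), lt_of_lt_of_le i.2 hm⟩ = i := by
    intro i
    simp [hα0, Fin.ext_iff, Nat.mod_eq_of_lt i.2]
  have hpos0 : 0 < eg hnpos Q α0 := by
    rw [eg, Finset.lt_inf'_iff]
    intro i _
    apply Finset.sum_pos'
    · intro j _; exact (hQpos i j).le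
    · exact ⟨⟨(i : ℕ), lt_of_lt_of_le i.2 hm⟩,
        Finset.mem_filter.mpr ⟨Finset.mem_univ _, hsurj i⟩, hQpos i _⟩
  have hle : eg hnpos Q αstar ≤ addUtil (Q k) k αstar :=
    Finset.inf'_le _ (Finset.mem_univ k)
  have hzero : addUtil (Q k) k αstar = 0 := by
    rw [addUtil]
    apply Finset.sum_eq_zero
    intro j hj
    exact absurd (Finset.mem_filter.mp hj).2 (hno j)
  have := hopt α0
  rw [hzero] at hle
  linarith
end
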